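/- Let F be a field of characteristic p > 0 and K/F a finite extension. Let e be the largest integer such that p^e divides [K:F]. For i ≥ 0, let F^(i) = { a^(1/p^i) : a ∈ F } (inside a fixed algebraic closure). Then for every e' ≥ e, every element b ∈ K is separable over F^(e'). -/

import Mathlib

/-!
Over the separable closure `S` of `F` in `K` the extension `K / S` is purely inseparable, so the
minimal polynomial of `x ∈ K` over `S` is `X ^ p ^ k - c`; its degree `p ^ k` divides `[K : F]`,
hence `k ≤ e` and `x ^ p ^ e'` is separable over `F`. Applying the inverse of the `e'`-th
Frobenius to the coefficients of the minimal polynomial of `x ^ p ^ e'` over `F` yields a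
separable polynomial over `F^(e')` that vanishes at `x`.
-/

open Polynomial IsPurelyInseparable

theorem pow_mem_separableClosure_of_not_dvd_finrank {F K : Type*} [Field F] [Field K]
    [Algebra F K] [FiniteDimensional F K] (p : ℕ) [ExpChar F p] (x : K) {e n : ℕ}
    (he : ¬ p ^ (e + 1) ∣ Module.finrank F K) (hn : e ≤ n) :
    x ^ p ^ n ∈ separableClosure F K := by
  set S := separableClosure F K
  have : ExpChar S p := expChar_of_injective_algebraMap (algebraMap F S).injective p
  have hdvd : p ^ elemExponent S x ∣ Module.finrank F K := calc
    p ^ elemExponent S x = (minpoly S x).natDegree := (minpoly_natDegree_eq' S p x).symm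
    _ ∣ Module.finrank S K := minpoly.degree_dvd (Algebra.IsIntegral.isIntegral x)
    _ ∣ Module.finrank F K := Dvd.intro_left _ (Module.finrank_mul_finrank F S K)
  have hle : elemExponent S x ≤ n := by
    by_contra! h
    exact he ((pow_dvd_pow p (by omega)).trans hdvd)
  obtain ⟨y, hy⟩ := elemExponent_def' S p x
  rw [← Nat.sub_add_cancel hle, pow_add, mul_comm, pow_mul, ← hy]
  exact pow_mem y.2 _

theorem isSeparable_comap_fieldRange_of_isSeparable_apply {F Ω : Type*} [Field F] [Field Ω]
    [Algebra F Ω] (σ : Ω ≃+* Ω) {x : Ω} (h : IsSeparable F (σ x)) :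
    IsSeparable ((algebraMap F Ω).fieldRange.comap (σ : Ω →+* Ω)) x := by
  set L := (algebraMap F Ω).fieldRange.comap (σ : Ω →+* Ω)
  let ψ : F →+* L := ((σ.symm : Ω →+* Ω).comp (algebraMap F Ω)).codRestrict L fun c ↦
    Subfield.mem_comap.mpr ⟨c, (σ.apply_symm_apply _).symm⟩
  have hroot : aeval x ((minpoly F (σ x)).map ψ) = 0 := by
    rw [aeval_def, eval₂_map]
    calc eval₂ ((σ.symm : Ω →+* Ω).comp (algebraMap F Ω)) x (minpoly F (σ x))
        = (σ.symm : Ω →+* Ω) (aeval (σ x) (minpoly F (σ x))) := by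
          rw [aeval_def, hom_eval₂, RingEquiv.coe_toRingHom, σ.symm_apply_apply]
      _ = 0 := by rw [minpoly.aeval, map_zero]
  exact (Separable.map h (f := ψ)).of_dvd (minpoly.dvd L x hroot)

theorem isSeparable_comap_iterateFrobenius_fieldRange {F Ω : Type*} [Field F] [Field Ω]
    [Algebra F Ω] (p : ℕ) [ExpChar Ω p] [PerfectRing Ω p] (n : ℕ) {x : Ω}
    (h : IsSeparable F (x ^ p ^ n)) :
    IsSeparable ((algebraMap F Ω).fieldRange.comap (iterateFrobenius Ω p n)) x :=
  isSeparable_comap_fieldRange_of_isSeparable_apply (iterateFrobeniusEquiv Ω p n) h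

theorem separable_over_pth_root_field_general
    (p : ℕ)
    (F : Type*) [Field F]
    (Ω : Type*) [Field Ω] [Algebra F Ω] [IsAlgClosure F Ω] [ExpChar Ω p]
    (K : IntermediateField F Ω) [FiniteDimensional F K]
    (e : ℕ)
    (he' : ¬ p ^ (e + 1) ∣ Module.finrank F K)
    (e' : ℕ) (hee' : e ≤ e')
    (b : Ω) (hb : b ∈ K) :
    (minpoly (↥(Subfield.comap (iterateFrobenius Ω p e')
        ((algebraMap F Ω).fieldRange))) b).Separable := by
  have : ExpChar F p := (algebraMap F Ω).expChar (algebraMap F Ω).injective p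
  have : PerfectField Ω := (IsAlgClosure.isAlgClosed F).perfectField
  have hsepK : IsSeparable F ((⟨b, hb⟩ : K) ^ p ^ e') :=
    mem_separableClosure_iff.mp (pow_mem_separableClosure_of_not_dvd_finrank p _ he' hee')
  have hsep : IsSeparable F (b ^ p ^ e') := by
    simpa using hsepK.map K.val Subtype.val_injective
  exact isSeparable_comap_iterateFrobenius_fieldRange p e' hsep

/-- Let `F` be a field of characteristic `p > 0` and `K/F` a finite
extension inside a fixed algebraic closure `Ω`. Let `e` be the largest integer such that
`p ^ e` divides `[K : F]`. For `i ≥ 0`, `F^(i)` is the subfield of `Ω` consisting of the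
`p^i`-th roots of elements of `F` (i.e. the preimage of `F` under the `i`-th iterate of
Frobenius). Then for every `e' ≥ e`, every element `b ∈ K` is separable over `F^(e')`. -/
theorem separable_over_pth_root_field
    (p : ℕ) (hp : p.Prime)
    (F : Type*) [Field F] [CharP F p]
    (Ω : Type*) [Field Ω] [Algebra F Ω] [IsAlgClosure F Ω] [CharP Ω p] [ExpChar Ω p]
    (K : IntermediateField F Ω) [FiniteDimensional F K]
    (e : ℕ)
    (he : p ^ e ∣ Module.finrank F K)
    (he' : ¬ p ^ (e + 1) ∣ Module.finrank F K)
    (e' : ℕ) (hee' : e ≤ e')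
    (b : Ω) (hb : b ∈ K) :
    (minpoly (↥(Subfield.comap (iterateFrobenius Ω p e')
        ((algebraMap F Ω).fieldRange))) b).Separable :=
  separable_over_pth_root_field_general p F Ω K e he' e' hee' b hb
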